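/- arXiv:1401.1225 — 3 statements merged into one kernel-verified Lean document; each statement's English description precedes it below -/
import Mathlib

section
/- If P and Q are finite posets each of height at most 2, then the maximum size of a semiantichain in P×Q equals the minimum number of unichains needed to cover P×Q. -/
/-- A *unichain* in the product of two posets: a chain of the form `{p} × C`
or `C × {q}`. -/
def IsUnichain {α β : Type*} [PartialOrder α] [PartialOrder β] (U : Set (α × β)) : Prop :=
  (∃ (p : α) (C : Set β), IsChain (· ≤ ·) C ∧ U = ({p} : Set α) ×ˢ C) ∨
  (∃ (q : β) (C : Set α), IsChain (· ≤ ·) C ∧ U = C ×ˢ ({q} : Set β))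

/-- A *semiantichain*: no two distinct elements lie in a common unichain. -/
def IsSemiantichain {α β : Type*} [PartialOrder α] [PartialOrder β] (S : Set (α × β)) : Prop :=
  ∀ x ∈ S, ∀ y ∈ S, x ≠ y → ∀ U : Set (α × β), IsUnichain U → ¬(x ∈ U ∧ y ∈ U)

/-- The maximum size of a semiantichain in `α × β`. -/
noncomputable def maxSemiantichain (α β : Type*) [PartialOrder α] [PartialOrder β] : ℕ :=
  sSup {n | ∃ S : Set (α × β), IsSemiantichain S ∧ S.ncard = n}

/-- The minimum number of unichains needed to cover `α × β`. -/
noncomputable def minUnichainCover (α β : Type*) [PartialOrder α] [PartialOrder β] : ℕ :=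
  sInf {n | ∃ U : Fin n → Set (α × β), (∀ i, IsUnichain (U i)) ∧ (⋃ i, U i) = Set.univ}

/-- Height: maximum size of a chain. -/
noncomputable def heightP (α : Type*) [PartialOrder α] : ℕ :=
  sSup {n | ∃ C : Set α, IsChain (· ≤ ·) C ∧ C.ncard = n}

/-- Width: maximum size of an antichain. -/
noncomputable def widthP (α : Type*) [PartialOrder α] : ℕ :=
  sSup {n | ∃ A : Set α, IsAntichain (· ≤ ·) A ∧ A.ncard = n}

/-- `dk α k`: maximum size of a union of `k` antichains. -/
noncomputable def dk (α : Type*) [PartialOrder α] (k : ℕ) : ℕ :=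
  sSup {n | ∃ A : Fin k → Set α, (∀ i, IsAntichain (· ≤ ·) (A i)) ∧ (⋃ i, A i).ncard = n}

/-- `ck α k`: maximum size of a union of `k` chains. -/
noncomputable def ck (α : Type*) [PartialOrder α] (k : ℕ) : ℕ :=
  sSup {n | ∃ C : Fin k → Set α, (∀ i, IsChain (· ≤ ·) (C i)) ∧ (⋃ i, C i).ncard = n}

/-- `P` is d-decomposable: it has an antichain partition `A_1, …, A_{h(P)}`
with `|A_1 ∪ … ∪ A_k| = d_k(P)` for every `k ≤ h(P)`. -/
def DDecomposable (α : Type*) [PartialOrder α] : Prop :=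
  ∃ A : Fin (heightP α) → Set α,
    (∀ i, IsAntichain (· ≤ ·) (A i)) ∧
    (∀ i j, i ≠ j → Disjoint (A i) (A j)) ∧
    (⋃ i, A i) = Set.univ ∧
    ∀ k, k ≤ heightP α →
      (⋃ i : Fin (heightP α), ⋃ (_ : (i : ℕ) < k), A i).ncard = dk α k

/-- `P` is c-decomposable: it has a chain partition `C_1, …, C_{w(P)}`
with `|C_1 ∪ … ∪ C_k| = c_k(P)` for every `k ≤ w(P)`. -/
def CDecomposable (α : Type*) [PartialOrder α] : Prop :=
  ∃ C : Fin (widthP α) → Set α,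
    (∀ i, IsChain (· ≤ ·) (C i)) ∧
    (∀ i j, i ≠ j → Disjoint (C i) (C j)) ∧
    (⋃ i, C i) = Set.univ ∧
    ∀ k, k ≤ widthP α →
      (⋃ i : Fin (widthP α), ⋃ (_ : (i : ℕ) < k), C i).ncard = ck α k

/-! Two points of `P × Q` lie in a common unichain iff they agree in one coordinate and are
strictly comparable in the other. Semiantichains are the independent sets of this graph and
unichains are its nonempty cliques. When both heights are at most 2, an edge changes exactly one
coordinate from minimal to non-minimal, so the graph is bipartite. By König's theorem a minimum
vertex cover `K` can be matched injectively into its complement: the complement of `K` is then a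
semiantichain, and the matching edges together with the unmatched singletons outside `K` form a
unichain cover of the same size. Conversely a unichain meets a semiantichain at most once. -/

namespace SimpleGraph

open Finset

variable {V : Type*} {G : SimpleGraph V}

/-- Hall's condition at a minimum vertex cover: otherwise replacing `s` by its neighbours outside
`K` would give a smaller vertex cover. -/
lemma card_le_card_biUnion_neighborFinset_sdiff_of_isIndepSet [Fintype V] [DecidableEq V]
    [DecidableRel G.Adj] {K s : Finset V} (hK : G.IsVertexCover K)
    (hmin : ∀ K' : Finset V, G.IsVertexCover K' → #K ≤ #K') (hsK : s ⊆ K)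
    (hs : G.IsIndepSet s) : #s ≤ #(s.biUnion fun v => G.neighborFinset v \ K) := by
  set N := s.biUnion fun v => G.neighborFinset v \ K
  by_contra! hlt
  have hexit : ∀ ⦃v w⦄, G.Adj v w → v ∈ s → w ∈ K \ s ∪ N := by
    intro v w hvw hv
    have hw : w ∉ s := fun hw => hs hv hw hvw.ne hvw
    by_cases hwK : w ∈ K
    · exact mem_union_left _ (mem_sdiff.2 ⟨hwK, hw⟩)
    · exact mem_union_right _ (mem_biUnion.2 ⟨v, hv, by simpa [hwK] using hvw⟩)
  have hcover : G.IsVertexCover ↑(K \ s ∪ N) := by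
    intro v w hvw
    by_cases hv : v ∈ s
    · exact Or.inr (hexit hvw hv)
    by_cases hw : w ∈ s
    · exact Or.inl (hexit hvw.symm hw)
    rcases hK hvw with h | h
    · exact Or.inl (mem_union_left _ (mem_sdiff.2 ⟨h, hv⟩))
    · exact Or.inr (mem_union_left _ (mem_sdiff.2 ⟨h, hw⟩))
  have := hmin _ hcover
  have := card_union_le (K \ s) N
  have := card_sdiff_of_subset hsK
  have := card_le_card hsK
  omega

lemma card_le_card_biUnion_neighborFinset_sdiff [Fintype V] [DecidableEq V] [DecidableRel G.Adj]
    (C : G.Coloring Bool) {K s : Finset V} (hK : G.IsVertexCover K)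
    (hmin : ∀ K' : Finset V, G.IsVertexCover K' → #K ≤ #K') (hsK : s ⊆ K) :
    #s ≤ #(s.biUnion fun v => G.neighborFinset v \ K) := by
  set N : Finset V → Finset V := fun s => s.biUnion fun v => G.neighborFinset v \ K
  set s₁ := s.filter (C · = true)
  set s₀ := s.filter (C · = false)
  have hcard : #s = #s₁ + #s₀ := by
    simpa [s₁, s₀] using (card_filter_add_card_filter_not (s := s) (p := (C · = true))).symm
  have hindep (b : Bool) : G.IsIndepSet ↑(s.filter (C · = b)) := by
    intro v hv w hw _ hvw
    simp only [mem_coe, mem_filter] at hv hw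
    exact C.valid hvw (hv.2.trans hw.2.symm)
  have hdisj : Disjoint (N s₁) (N s₀) := by
    rw [Finset.disjoint_left]
    intro w hw₁ hw₀
    simp only [N, s₁, s₀, mem_biUnion, mem_filter, mem_sdiff, mem_neighborFinset] at hw₁ hw₀
    obtain ⟨v, ⟨-, hv⟩, hvw, -⟩ := hw₁
    obtain ⟨v', ⟨-, hv'⟩, hv'w, -⟩ := hw₀
    have := C.valid hvw
    have := C.valid hv'w
    cases h : C w <;> simp_all
  calc #s = #s₁ + #s₀ := hcard
    _ ≤ #(N s₁) + #(N s₀) := add_le_add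
        (card_le_card_biUnion_neighborFinset_sdiff_of_isIndepSet hK hmin
          ((filter_subset _ _).trans hsK) (hindep true))
        (card_le_card_biUnion_neighborFinset_sdiff_of_isIndepSet hK hmin
          ((filter_subset _ _).trans hsK) (hindep false))
    _ = #(N s₁ ∪ N s₀) := (card_union_of_disjoint hdisj).symm
    _ ≤ #(N s) := card_le_card <| union_subset
        (biUnion_subset_biUnion_of_subset_left _ (filter_subset _ _))
        (biUnion_subset_biUnion_of_subset_left _ (filter_subset _ _))

theorem exists_isVertexCover_injective_adj_notMem [Finite V] (C : G.Coloring Bool) :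
    ∃ K : Finset V, G.IsVertexCover K ∧
      ∃ f : K → V, Function.Injective f ∧ ∀ v : K, G.Adj v (f v) ∧ f v ∉ K := by
  classical
  have := Fintype.ofFinite V
  obtain ⟨K, hK, hmin⟩ := exists_min_image ({K | G.IsVertexCover ↑K} : Finset (Finset V)) card
    ⟨univ, by simp⟩
  simp only [mem_filter, mem_univ, true_and] at hK hmin
  refine ⟨K, hK, ?_⟩
  obtain ⟨f, hf, hfK⟩ := (all_card_le_biUnion_card_iff_exists_injective
    fun v : K => G.neighborFinset v \ K).1 fun s => by
      simpa [image_biUnion, card_image_of_injective _ Subtype.val_injective] using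
        card_le_card_biUnion_neighborFinset_sdiff C hK hmin (s := s.image Subtype.val)
          (image_subset_iff.2 fun v _ => v.2)
  exact ⟨f, hf, fun v => by simpa using hfK v⟩

theorem exists_isIndepSet_isClique_cover [Finite V] (C : G.Coloring Bool) :
    ∃ (S : Set V) (U : S → Set V), G.IsIndepSet S ∧ (∀ s, ↑s ∈ U s ∧ G.IsClique (U s)) ∧
      ⋃ s, U s = Set.univ := by
  obtain ⟨K, hK, f, hf, hfK⟩ := exists_isVertexCover_injective_adj_notMem C
  refine ⟨(↑K)ᶜ, fun w => insert ↑w (Subtype.val '' (f ⁻¹' {↑w})),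
    isIndepSet_compl_iff_isVertexCover.2 hK, fun w => ⟨Set.mem_insert _ _, ?_⟩, ?_⟩
  · refine Set.pairwise_insert.2 ⟨?_, ?_⟩
    · refine Set.Subsingleton.pairwise ?_ _
      rintro _ ⟨v, hv, rfl⟩ _ ⟨v', hv', rfl⟩
      exact congrArg Subtype.val (hf (hv.trans hv'.symm))
    · rintro _ ⟨v, hv, rfl⟩ -
      have hadj : G.Adj v (f v) := (hfK v).1
      rw [Set.mem_preimage, Set.mem_singleton_iff] at hv
      rw [hv] at hadj
      exact ⟨hadj.symm, hadj⟩
  · refine Set.eq_univ_of_forall fun v => Set.mem_iUnion.2 ?_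
    by_cases hv : v ∈ K
    · exact ⟨⟨f ⟨v, hv⟩, (hfK _).2⟩, Set.mem_insert_of_mem _ ⟨⟨v, hv⟩, rfl, rfl⟩⟩
    · exact ⟨⟨v, hv⟩, Set.mem_insert _ _⟩

end SimpleGraph

lemma three_le_heightP_of_lt_of_lt {α : Type*} [PartialOrder α] [Finite α] {a b c : α}
    (hab : a < b) (hbc : b < c) : 3 ≤ heightP α := by
  refine le_csSup ⟨Nat.card α, ?_⟩ ⟨{a, b, c}, ?_,
    Set.ncard_eq_three.2 ⟨a, b, c, hab.ne, (hab.trans hbc).ne, hbc.ne, rfl⟩⟩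
  · rintro _ ⟨C, -, rfl⟩
    exact Set.ncard_le_card C
  · exact (IsChain.pair hbc.le).insert fun x hx _ =>
      Or.inl (by rcases hx with rfl | rfl; exacts [hab.le, (hab.trans hbc).le])

lemma isMin_of_lt_of_heightP_le_two {α : Type*} [PartialOrder α] [Finite α] (h : heightP α ≤ 2)
    {a b : α} (hab : a < b) : IsMin a :=
  isMin_iff_forall_not_lt.2 fun _ hca => by
    have := three_le_heightP_of_lt_of_lt hca hab
    omega

section Product

open Set

variable {α β : Type*} [PartialOrder α] [PartialOrder β]

def unichainGraph (α β : Type*) [PartialOrder α] [PartialOrder β] : SimpleGraph (α × β) where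
  Adj v w := v.1 = w.1 ∧ (v.2 < w.2 ∨ w.2 < v.2) ∨ v.2 = w.2 ∧ (v.1 < w.1 ∨ w.1 < v.1)

@[simp]
lemma unichainGraph_adj {v w : α × β} : (unichainGraph α β).Adj v w ↔
    v.1 = w.1 ∧ (v.2 < w.2 ∨ w.2 < v.2) ∨ v.2 = w.2 ∧ (v.1 < w.1 ∨ w.1 < v.1) :=
  Iff.rfl

lemma IsUnichain.unichainGraph_adj {U : Set (α × β)} (hU : IsUnichain U) {v w : α × β}
    (hv : v ∈ U) (hw : w ∈ U) (hne : v ≠ w) : (unichainGraph α β).Adj v w := by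
  rcases hU with ⟨p, C, hC, rfl⟩ | ⟨q, C, hC, rfl⟩
  · have h₁ : v.1 = w.1 := hv.1.trans hw.1.symm
    have h₂ : v.2 ≠ w.2 := fun h => hne (Prod.ext h₁ h)
    exact Or.inl ⟨h₁, (hC hv.2 hw.2 h₂).imp h₂.lt_of_le h₂.lt_of_le'⟩
  · have h₂ : v.2 = w.2 := hv.2.trans hw.2.symm
    have h₁ : v.1 ≠ w.1 := fun h => hne (Prod.ext h h₂)
    exact Or.inr ⟨h₂, (hC hv.1 hw.1 h₁).imp h₁.lt_of_le h₁.lt_of_le'⟩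

lemma SimpleGraph.IsIndepSet.isSemiantichain {S : Set (α × β)}
    (hS : (unichainGraph α β).IsIndepSet S) : IsSemiantichain S :=
  fun _ hx _ hy hne _ hU ⟨hxU, hyU⟩ => hS hx hy hne (hU.unichainGraph_adj hxU hyU hne)

lemma isUnichain_of_isClique_of_forall_fst_eq {U : Set (α × β)}
    (hU : (unichainGraph α β).IsClique U) {p : α} (hp : ∀ u ∈ U, u.1 = p) : IsUnichain U := by
  refine Or.inl ⟨p, Prod.snd '' U, ?_, ?_⟩
  · rintro _ ⟨u, hu, rfl⟩ _ ⟨w, hw, rfl⟩ hne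
    rcases unichainGraph_adj.1 <| hU hu hw (by rintro rfl; exact hne rfl) with
      ⟨-, h | h⟩ | ⟨h, -⟩
    exacts [Or.inl h.le, Or.inr h.le, absurd h hne]
  · ext ⟨a, b⟩
    refine ⟨fun h => ⟨hp _ h, _, h, rfl⟩, ?_⟩
    rintro ⟨rfl : a = p, u, hu, rfl : u.2 = b⟩
    simpa [← hp u hu] using hu

lemma isUnichain_of_isClique_of_forall_snd_eq {U : Set (α × β)}
    (hU : (unichainGraph α β).IsClique U) {q : β} (hq : ∀ u ∈ U, u.2 = q) : IsUnichain U := by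
  refine Or.inr ⟨q, Prod.fst '' U, ?_, ?_⟩
  · rintro _ ⟨u, hu, rfl⟩ _ ⟨w, hw, rfl⟩ hne
    rcases unichainGraph_adj.1 <| hU hu hw (by rintro rfl; exact hne rfl) with
      ⟨h, -⟩ | ⟨-, h | h⟩
    exacts [absurd h hne, Or.inl h.le, Or.inr h.le]
  · ext ⟨a, b⟩
    refine ⟨fun h => ⟨⟨_, h, rfl⟩, hq _ h⟩, ?_⟩
    rintro ⟨⟨u, hu, rfl : u.1 = a⟩, rfl : b = q⟩
    simpa [← hq u hu] using hu

lemma SimpleGraph.IsClique.isUnichain {U : Set (α × β)} (hU : (unichainGraph α β).IsClique U)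
    {v : α × β} (hv : v ∈ U) : IsUnichain U := by
  by_cases hrow : ∀ u ∈ U, u.1 = v.1
  · exact isUnichain_of_isClique_of_forall_fst_eq hU hrow
  push Not at hrow
  obtain ⟨w, hw, hwv⟩ := hrow
  refine isUnichain_of_isClique_of_forall_snd_eq hU (q := v.2) fun u hu => ?_
  by_contra huv
  have hw₂ : w.2 = v.2 := by
    rcases unichainGraph_adj.1 <| hU hw hv (by rintro rfl; exact hwv rfl) with ⟨h, -⟩ | ⟨h, -⟩
    exacts [absurd h hwv, h]
  have hu₁ : u.1 = v.1 := by
    rcases unichainGraph_adj.1 <| hU hu hv (by rintro rfl; exact huv rfl) with ⟨h, -⟩ | ⟨h, -⟩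
    exacts [h, absurd h huv]
  rcases unichainGraph_adj.1 <| hU hu hw (by rintro rfl; exact huv hw₂) with ⟨h, -⟩ | ⟨h, -⟩
  exacts [hwv (h.symm.trans hu₁), huv (h.trans hw₂)]

open Classical in
noncomputable def unichainGraphColoring [Finite α] [Finite β] (hα : heightP α ≤ 2)
    (hβ : heightP β ≤ 2) : (unichainGraph α β).Coloring Bool :=
  SimpleGraph.Coloring.mk (fun v => decide (IsMin v.1 ↔ IsMin v.2)) fun {v w} hvw => by
    rcases unichainGraph_adj.1 hvw with ⟨h, h' | h'⟩ | ⟨h, h' | h'⟩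
    · simp [h, isMin_of_lt_of_heightP_le_two hβ h', not_isMin_of_lt h', -not_isMin_iff]
    · simp [h, isMin_of_lt_of_heightP_le_two hβ h', not_isMin_of_lt h', -not_isMin_iff]
    · simp [h, isMin_of_lt_of_heightP_le_two hα h', not_isMin_of_lt h', -not_isMin_iff]
    · simp [h, isMin_of_lt_of_heightP_le_two hα h', not_isMin_of_lt h', -not_isMin_iff]

lemma IsSemiantichain.ncard_le_of_iUnion_eq_univ {ι : Type*} [Finite ι] {S : Set (α × β)}
    (hS : IsSemiantichain S) {U : ι → Set (α × β)} (hU : ∀ i, IsUnichain (U i))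
    (hcov : ⋃ i, U i = univ) : S.ncard ≤ Nat.card ι := by
  have hmem (x : α × β) : ∃ i, x ∈ U i := mem_iUnion.1 (hcov ▸ mem_univ x)
  choose φ hφ using hmem
  have hφ : S.InjOn φ := fun x hx y hy hxy =>
    by_contra fun hne => hS x hx y hy hne _ (hU (φ x)) ⟨hφ x, hxy ▸ hφ y⟩
  simpa using ncard_le_ncard_of_injOn φ (fun _ _ => mem_univ _) hφ

lemma ncard_le_maxSemiantichain [Finite α] [Finite β] {S : Set (α × β)}
    (hS : IsSemiantichain S) : S.ncard ≤ maxSemiantichain α β :=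
  le_csSup ⟨Nat.card (α × β), by rintro _ ⟨T, -, rfl⟩; exact ncard_le_card T⟩ ⟨S, hS, rfl⟩

lemma exists_fin_unichain_cover {ι : Type*} [Finite ι] {U : ι → Set (α × β)}
    (hU : ∀ i, IsUnichain (U i)) (hcov : ⋃ i, U i = univ) :
    ∃ U' : Fin (Nat.card ι) → Set (α × β), (∀ i, IsUnichain (U' i)) ∧ ⋃ i, U' i = univ :=
  ⟨U ∘ (Finite.equivFin ι).symm, fun _ => hU _, by
    rw [← hcov]; exact (Finite.equivFin ι).symm.surjective.iUnion_comp U⟩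

lemma minUnichainCover_le_natCard {ι : Type*} [Finite ι] {U : ι → Set (α × β)}
    (hU : ∀ i, IsUnichain (U i)) (hcov : ⋃ i, U i = univ) :
    minUnichainCover α β ≤ Nat.card ι :=
  Nat.sInf_le (exists_fin_unichain_cover hU hcov)

lemma maxSemiantichain_le_minUnichainCover [Finite α] [Finite β] :
    maxSemiantichain α β ≤ minUnichainCover α β := by
  have hmin : minUnichainCover α β ∈
      {n | ∃ U : Fin n → Set (α × β), (∀ i, IsUnichain (U i)) ∧ ⋃ i, U i = univ} :=
    Nat.sInf_mem ⟨_, exists_fin_unichain_cover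
      (fun v => (SimpleGraph.isClique_singleton v).isUnichain (mem_singleton v))
      (iUnion_of_singleton (α × β))⟩
  obtain ⟨U, hU, hcov⟩ := hmin
  refine csSup_le ⟨0, ∅, fun _ h => h.elim, ncard_empty _⟩ ?_
  rintro _ ⟨S, hS, rfl⟩
  simpa using hS.ncard_le_of_iUnion_eq_univ hU hcov

end Product

/-- If `P` and `Q` are finite posets of height at most `2`, then the maximum
size of a semiantichain in `P × Q` equals the minimum number of unichains
needed to cover `P × Q`. -/
theorem semiantichain_unichain_duality_of_height_le_two
    (α β : Type) [Fintype α] [PartialOrder α] [Fintype β] [PartialOrder β]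
    (hα : heightP α ≤ 2) (hβ : heightP β ≤ 2) :
    maxSemiantichain α β = minUnichainCover α β := by
  obtain ⟨S, U, hS, hU, hcov⟩ :=
    (unichainGraph α β).exists_isIndepSet_isClique_cover (unichainGraphColoring hα hβ)
  refine maxSemiantichain_le_minUnichainCover.antisymm ?_
  calc minUnichainCover α β ≤ S.ncard :=
        minUnichainCover_le_natCard (fun s => (hU s).2.isUnichain (hU s).1) hcov
    _ ≤ maxSemiantichain α β := ncard_le_maxSemiantichain hS.isSemiantichain
end

section
/- If finite posets P and Q are both d-decomposable, with heights h(P) and h(Q), then the product P×Q contains a semiantichain of size ∑_{i=1}^{min(h(P),h(Q))} μ_i^P·μ_i^Q. -/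
open Function

/-!
Take the antichain partitions `A_i` of `P` and `B_i` of `Q` with `|A_i| = μ_i^P`, `|B_i| = μ_i^Q`
and let `S = ⋃_{i < min(h(P), h(Q))} A_i × B_i`. A unichain `{p} × C` meets `S` only inside
`{p} × B_i` for the unique `i` with `p ∈ A_i`, hence in at most one point because `B_i` is an
antichain; symmetrically for `C × {q}`. The blocks are disjoint, so `|S| = ∑ μ_i^P μ_i^Q`.
-/

theorem isSemiantichain_of_eq_of_le {α β : Type*} [PartialOrder α] [PartialOrder β]
    {S : Set (α × β)}
    (h₁ : ∀ x ∈ S, ∀ y ∈ S, x.1 = y.1 → x.2 ≤ y.2 → x = y)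
    (h₂ : ∀ x ∈ S, ∀ y ∈ S, x.2 = y.2 → x.1 ≤ y.1 → x = y) :
    IsSemiantichain S := by
  rintro x hx y hy hxy U (⟨p, C, hC, rfl⟩ | ⟨q, C, hC, rfl⟩) ⟨⟨hxp, hxC⟩, ⟨hyp, hyC⟩⟩
  · have hfst : x.1 = y.1 := hxp.trans hyp.symm
    rcases hC.total hxC hyC with hle | hle
    · exact hxy (h₁ x hx y hy hfst hle)
    · exact hxy (h₁ y hy x hx hfst.symm hle).symm
  · have hsnd : x.2 = y.2 := hxC.trans hyC.symm
    rcases hC.total hxp hyp with hle | hle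
    · exact hxy (h₂ x hx y hy hsnd hle)
    · exact hxy (h₂ y hy x hx hsnd.symm hle).symm

theorem isSemiantichain_iUnion_prod {ι α β : Type*} [PartialOrder α] [PartialOrder β]
    {A : ι → Set α} {B : ι → Set β}
    (hA : ∀ i, IsAntichain (· ≤ ·) (A i)) (hAd : Pairwise (Disjoint on A))
    (hB : ∀ i, IsAntichain (· ≤ ·) (B i)) (hBd : Pairwise (Disjoint on B)) :
    IsSemiantichain (⋃ i, A i ×ˢ B i) := by
  refine isSemiantichain_of_eq_of_le ?_ ?_ <;>
    simp only [Set.mem_iUnion, Set.mem_prod] <;>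
    rintro x ⟨i, hxA, hxB⟩ y ⟨j, hyA, hyB⟩ heq hle
  · obtain rfl : i = j := hAd.eq (Set.not_disjoint_iff.2 ⟨x.1, hxA, heq ▸ hyA⟩)
    exact Prod.ext heq ((hB i).eq hxB hyB hle)
  · obtain rfl : i = j := hBd.eq (Set.not_disjoint_iff.2 ⟨x.2, hxB, heq ▸ hyB⟩)
    exact Prod.ext ((hA i).eq hxA hyA hle) heq

theorem ncard_iUnion_lt_succ {γ : Type*} {n : ℕ} {s : Fin n → Set γ}
    (hs : ∀ i, (s i).Finite) (hd : Pairwise (Disjoint on s)) (i : Fin n) :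
    (⋃ j : Fin n, ⋃ (_ : (j : ℕ) < i + 1), s j).ncard =
      (⋃ j : Fin n, ⋃ (_ : (j : ℕ) < i), s j).ncard + (s i).ncard := by
  have hsplit : (⋃ j : Fin n, ⋃ (_ : (j : ℕ) < i + 1), s j) =
      (⋃ j : Fin n, ⋃ (_ : (j : ℕ) < i), s j) ∪ s i := by
    ext x
    simp only [Set.mem_iUnion, Set.mem_union, Nat.lt_succ_iff_lt_or_eq, Fin.val_inj]
    constructor
    · rintro ⟨j, hj | rfl, hx⟩
      exacts [Or.inl ⟨j, hj, hx⟩, Or.inr hx]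
    · rintro (⟨j, hj, hx⟩ | hx)
      exacts [⟨j, Or.inl hj, hx⟩, ⟨i, Or.inr rfl, hx⟩]
  rw [hsplit, Set.ncard_union_eq _ (Set.finite_iUnion fun j => (Set.finite_iUnion fun _ => hs j))
    (hs i)]
  exact Set.disjoint_iUnion_left.2 fun j => Set.disjoint_iUnion_left.2 fun hj =>
    hd (Fin.ne_of_lt hj)

theorem DDecomposable.exists_antichain_partition {α : Type*} [PartialOrder α] [Finite α]
    (h : DDecomposable α) :
    ∃ A : Fin (heightP α) → Set α, (∀ i, IsAntichain (· ≤ ·) (A i)) ∧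
      Pairwise (Disjoint on A) ∧ ∀ i, (A i).ncard = dk α (i + 1) - dk α i := by
  obtain ⟨A, hA, hAd, -, hd⟩ := h
  refine ⟨A, hA, hAd, fun i => ?_⟩
  rw [← hd (i + 1) i.isLt, ← hd i i.isLt.le, ncard_iUnion_lt_succ (fun _ => Set.toFinite _) hAd i]
  omega

/-- If finite posets `P` and `Q` are both d-decomposable, then `P × Q` contains
a (decomposable) semiantichain of size
`∑_{i=1}^{min(h(P),h(Q))} μ_i^P μ_i^Q`, where `μ_i = d_i - d_{i-1}`. -/
theorem exists_semiantichain_of_dDecomposable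
    (α β : Type) [Fintype α] [PartialOrder α] [Fintype β] [PartialOrder β]
    (hP : DDecomposable α) (hQ : DDecomposable β) :
    ∃ S : Set (α × β), IsSemiantichain S ∧
      S.ncard = ∑ i ∈ Finset.range (min (heightP α) (heightP β)),
        (dk α (i + 1) - dk α i) * (dk β (i + 1) - dk β i) := by
  obtain ⟨A, hA, hAd, hAcard⟩ := hP.exists_antichain_partition
  obtain ⟨B, hB, hBd, hBcard⟩ := hQ.exists_antichain_partition
  set m := min (heightP α) (heightP β)
  let ιA : Fin m → Fin (heightP α) := Fin.castLE (min_le_left _ _)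
  let ιB : Fin m → Fin (heightP β) := Fin.castLE (min_le_right _ _)
  have hAd' := hAd.comp_of_injective (Fin.castLE_injective _ : Injective ιA)
  have hBd' := hBd.comp_of_injective (Fin.castLE_injective _ : Injective ιB)
  refine ⟨⋃ i, A (ιA i) ×ˢ B (ιB i),
    isSemiantichain_iUnion_prod (fun _ => hA _) hAd' (fun _ => hB _) hBd', ?_⟩
  have hblocks : Pairwise (Disjoint on fun i : Fin m => A (ιA i) ×ˢ B (ιB i)) :=
    fun i j hij => Set.disjoint_prod.2 (Or.inl (hAd' hij))
  rw [Set.ncard_iUnion_of_finite (fun _ => Set.toFinite _) hblocks, finsum_eq_sum_of_fintype,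
    Finset.sum_range]
  exact Finset.sum_congr rfl fun i _ => by rw [Set.ncard_prod, hAcard, hBcard]; rfl
end

section
/- If finite posets P and P' are both d-decomposable, then their series composition P*P' and their parallel composition P+P' are d-decomposable; if P and P' are both c-decomposable, then P*P' and P+P' are c-decomposable. -/
open Finset in
theorem Finset.sum_le_sum_of_card_le_of_forall_le {ι M : Type*} [AddCommMonoid M] [LinearOrder M]
    [IsOrderedAddMonoid M] [CanonicallyOrderedAdd M] [DecidableEq ι] (f : ι → M)
    {s t : Finset ι} (hst : #s ≤ #t) (h : ∀ i ∈ t, ∀ j ∉ t, f j ≤ f i) :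
    ∑ i ∈ s, f i ≤ ∑ i ∈ t, f i := by
  rw [← sum_inter_add_sum_sdiff s t, ← sum_inter_add_sum_sdiff t s, inter_comm]
  refine add_le_add le_rfl ?_
  obtain hs | ⟨j, hj, hjmax⟩ := (s \ t).eq_empty_or_nonempty.imp_right
    fun hne => exists_max_image (s \ t) f hne
  · simp [hs]
  calc ∑ i ∈ s \ t, f i ≤ #(s \ t) • f j := sum_le_card_nsmul _ _ _ hjmax
    _ ≤ #(t \ s) • f j := nsmul_le_nsmul_left zero_le (card_sdiff_le_card_sdiff_iff.2 hst)
    _ ≤ ∑ i ∈ t \ s, f i := card_nsmul_le_sum _ _ _ fun i hi =>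
        h i (mem_sdiff.1 hi).1 j (mem_sdiff.1 hj).2

theorem exists_equiv_fin_antitone {ι M : Type*} [Fintype ι] [LinearOrder M] (f : ι → M) {n : ℕ}
    (hn : Fintype.card ι = n) : ∃ σ : Fin n ≃ ι, Antitone (f ∘ σ) := by
  let e : Fin n ≃ ι := (Fintype.equivFinOfCardEq hn).symm
  have hsort := Tuple.monotone_sort (OrderDual.toDual ∘ f ∘ e)
  exact ⟨(Tuple.sort (OrderDual.toDual ∘ f ∘ e)).trans e, monotone_toDual_comp_iff.1 hsort⟩

open Finset in
theorem sum_le_sum_fin_lt_of_antitone {ι M : Type*} [AddCommMonoid M] [LinearOrder M]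
    [IsOrderedAddMonoid M] [CanonicallyOrderedAdd M] {n : ℕ} (f : ι → M) (σ : Fin n ≃ ι)
    (hσ : Antitone (f ∘ σ)) {s : Finset ι} {k : ℕ} (hs : #s ≤ k) (hk : k ≤ n) :
    ∑ i ∈ s, f i ≤ ∑ j : Fin n with j.val < k, f (σ j) := by
  classical
  calc ∑ i ∈ s, f i ≤ ∑ i ∈ ({j : Fin n | j.val < k} : Finset _).map σ.toEmbedding, f i := by
        refine sum_le_sum_of_card_le_of_forall_le f ?_ ?_
        · rwa [card_map, Fin.card_filter_val_lt, min_eq_right hk]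
        · simp only [mem_map_equiv, mem_filter_univ]
          intro i hi j hj
          simpa using hσ (show σ.symm i ≤ σ.symm j by rw [Fin.le_def]; omega)
    _ = ∑ j : Fin n with j.val < k, f (σ j) := sum_map _ _ _

open Set Function

section MaxUnionCard

variable {γ δ : Type*}

/-- `dk α` and `ck α` are, by definition, `maxUnionCard` of the antichains and of the chains of
`α`. -/
noncomputable def maxUnionCard (G : Set γ → Prop) (k : ℕ) : ℕ :=
  sSup {n | ∃ F : Fin k → Set γ, (∀ i, G (F i)) ∧ (⋃ i, F i).ncard = n}

def padEmpty {m : ℕ} (F : Fin m → Set γ) (n : ℕ) : Fin n → Set γ :=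
  fun i => if h : (i : ℕ) < m then F ⟨i, h⟩ else ∅

theorem iUnion_fin_lt_padEmpty {m n : ℕ} (F : Fin m → Set γ) (hmn : m ≤ n) (k : ℕ) :
    ⋃ i : Fin n, ⋃ (_ : (i : ℕ) < k), padEmpty F n i = ⋃ i : Fin m, ⋃ (_ : (i : ℕ) < k), F i := by
  ext x
  simp only [padEmpty, mem_iUnion]
  constructor
  · rintro ⟨i, hik, hx⟩
    split_ifs at hx with him
    · exact ⟨_, hik, hx⟩
    · exact absurd hx (notMem_empty x)
  · rintro ⟨i, hik, hx⟩
    exact ⟨⟨i, by omega⟩, hik, by simpa [i.2] using hx⟩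

theorem iUnion_fin_lt_of_le {m k : ℕ} (F : Fin m → Set γ) (hmk : m ≤ k) :
    ⋃ i : Fin m, ⋃ (_ : (i : ℕ) < k), F i = ⋃ i, F i := by
  ext x
  simp only [mem_iUnion]
  exact ⟨fun ⟨i, _, hx⟩ => ⟨i, hx⟩, fun ⟨i, hx⟩ => ⟨i, by omega, hx⟩⟩

theorem iUnion_padEmpty {m n : ℕ} (F : Fin m → Set γ) (hmn : m ≤ n) :
    ⋃ i, padEmpty F n i = ⋃ i, F i := by
  rw [← iUnion_fin_lt_of_le _ le_rfl, iUnion_fin_lt_padEmpty F hmn, iUnion_fin_lt_of_le F hmn]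

theorem maxUnionCard_one (G : Set γ → Prop) :
    maxUnionCard G 1 = sSup {n | ∃ S, G S ∧ S.ncard = n} := by
  unfold maxUnionCard
  congr 1
  ext n
  constructor
  · rintro ⟨F, hF, rfl⟩
    exact ⟨F 0, hF 0, by congr 1; ext; simp [Fin.exists_fin_one]⟩
  · rintro ⟨S, hS, rfl⟩
    exact ⟨fun _ => S, fun _ => hS, by rw [iUnion_const]⟩

theorem maxUnionCard_zero (G : Set γ → Prop) : maxUnionCard G 0 = 0 :=
  Nat.eq_zero_of_le_zero <| csSup_le' <| by rintro _ ⟨F, -, rfl⟩; simp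

theorem bddAbove_ncard_iUnion [Finite γ] (G : Set γ → Prop) (k : ℕ) :
    BddAbove {n | ∃ F : Fin k → Set γ, (∀ i, G (F i)) ∧ (⋃ i, F i).ncard = n} :=
  ⟨Nat.card γ, by rintro _ ⟨F, -, rfl⟩; exact ncard_le_card _⟩

theorem maxUnionCard_le_card [Finite γ] (G : Set γ → Prop) (k : ℕ) :
    maxUnionCard G k ≤ Nat.card γ :=
  csSup_le' <| by rintro _ ⟨F, -, rfl⟩; exact ncard_le_card _

theorem ncard_iUnion_le_maxUnionCard [Finite γ] {G : Set γ → Prop} {k : ℕ} {F : Fin k → Set γ}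
    (hF : ∀ i, G (F i)) : (⋃ i, F i).ncard ≤ maxUnionCard G k :=
  le_csSup (bddAbove_ncard_iUnion G k) ⟨F, hF, rfl⟩

theorem exists_ncard_iUnion_eq_maxUnionCard [Finite γ] {G : Set γ → Prop} (hG : G ∅) (k : ℕ) :
    ∃ F : Fin k → Set γ, (∀ i, G (F i)) ∧ (⋃ i, F i).ncard = maxUnionCard G k :=
  Nat.sSup_mem (s := {n | ∃ F : Fin k → Set γ, (∀ i, G (F i)) ∧ (⋃ i, F i).ncard = n})
    ⟨_, fun _ => ∅, fun _ => hG, rfl⟩ (bddAbove_ncard_iUnion G k)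

theorem maxUnionCard_mono [Finite γ] {G : Set γ → Prop} (hG : G ∅) : Monotone (maxUnionCard G) := by
  intro k l hkl
  obtain ⟨F, hF, hcard⟩ := exists_ncard_iUnion_eq_maxUnionCard hG k
  rw [← hcard, ← iUnion_padEmpty F hkl]
  refine ncard_iUnion_le_maxUnionCard fun i => ?_
  unfold padEmpty
  split_ifs
  exacts [hF _, hG]

theorem ncard_biUnion_le_maxUnionCard [Finite γ] {G : Set γ → Prop} {ι : Type*} (s : Finset ι)
    {S : ι → Set γ} (hS : ∀ i ∈ s, G (S i)) : (⋃ i ∈ s, S i).ncard ≤ maxUnionCard G s.card := by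
  have hunion : ⋃ j, S (s.equivFin.symm j) = ⋃ i ∈ s, S i := by
    ext x
    simp only [mem_iUnion]
    exact ⟨fun ⟨j, hx⟩ => ⟨_, (s.equivFin.symm j).2, hx⟩,
      fun ⟨i, hi, hx⟩ => ⟨s.equivFin ⟨i, hi⟩, by simpa using hx⟩⟩
  rw [← hunion]
  exact ncard_iUnion_le_maxUnionCard fun j => hS _ (s.equivFin.symm j).2

theorem maxUnionCard_le_maxUnionCard_of_injective [Finite δ] {G : Set γ → Prop}
    {H : Set δ → Prop} {f : γ → δ} (hf : Injective f) (hGH : ∀ S, G S → H (f '' S)) (k : ℕ) :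
    maxUnionCard G k ≤ maxUnionCard H k := by
  refine csSup_le' ?_
  rintro _ ⟨F, hF, rfl⟩
  rw [← ncard_image_of_injective _ hf, image_iUnion]
  exact ncard_iUnion_le_maxUnionCard fun i => hGH _ (hF i)

theorem maxUnionCard_image_equiv (e : γ ≃ δ) (H : Set δ → Prop) (k : ℕ) :
    maxUnionCard (fun S => H (e '' S)) k = maxUnionCard H k := by
  unfold maxUnionCard
  congr 1
  ext n
  constructor
  · rintro ⟨F, hF, rfl⟩
    exact ⟨fun i => e '' F i, hF, by rw [← image_iUnion, ncard_image_of_injective _ e.injective]⟩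
  · rintro ⟨F, hF, rfl⟩
    refine ⟨fun i => e.symm '' F i, fun i => by simpa [image_image] using hF i, ?_⟩
    rw [← image_iUnion, ncard_image_of_injective _ e.symm.injective]

end MaxUnionCard

section OptimalPartition

variable {γ δ : Type*} {m : ℕ}

structure IsOptimalPartition (G : Set γ → Prop) (F : Fin m → Set γ) : Prop where
  good : ∀ i, G (F i)
  pairwise_disjoint : Pairwise (Disjoint on F)
  iUnion_eq_univ : ⋃ i, F i = univ
  ncard_iUnion_fin_lt_of_le :
    ∀ k ≤ m, (⋃ i : Fin m, ⋃ (_ : (i : ℕ) < k), F i).ncard = maxUnionCard G k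

theorem dDecomposable_iff (α : Type*) [PartialOrder α] :
    DDecomposable α ↔
      ∃ A : Fin (heightP α) → Set α, IsOptimalPartition (IsAntichain (· ≤ ·)) A :=
  ⟨fun ⟨A, h₁, h₂, h₃, h₄⟩ => ⟨A, h₁, fun i j => h₂ i j, h₃, h₄⟩,
    fun ⟨A, h⟩ => ⟨A, h.1, fun _ _ hij => h.2 hij, h.3, h.4⟩⟩

theorem cDecomposable_iff (α : Type*) [PartialOrder α] :
    CDecomposable α ↔ ∃ C : Fin (widthP α) → Set α, IsOptimalPartition (IsChain (· ≤ ·)) C :=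
  ⟨fun ⟨C, h₁, h₂, h₃, h₄⟩ => ⟨C, h₁, fun i j => h₂ i j, h₃, h₄⟩,
    fun ⟨C, h⟩ => ⟨C, h.1, fun _ _ hij => h.2 hij, h.3, h.4⟩⟩

theorem ncard_iUnion_fin_lt_eq_sum [Finite γ] {F : Fin m → Set γ} (hF : Pairwise (Disjoint on F))
    (k : ℕ) :
    (⋃ i : Fin m, ⋃ (_ : (i : ℕ) < k), F i).ncard = ∑ i : Fin m with i.val < k, (F i).ncard := by
  have hunion : ⋃ i : Fin m, ⋃ (_ : (i : ℕ) < k), F i =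
      ⋃ i ∈ (({i : Fin m | i.val < k} : Finset _) : Set (Fin m)), F i := by
    simp
  rw [hunion, (Finset.finite_toSet _).ncard_biUnion (fun _ _ => toFinite _)
    (fun i _ j _ hij => hF hij), finsum_mem_coe_finset]

theorem ncard_iUnion_fin_lt_le_maxUnionCard [Finite γ] {G : Set γ → Prop} {F : Fin m → Set γ}
    (hF : ∀ i, G (F i)) {k : ℕ} (hk : k ≤ m) :
    (⋃ i : Fin m, ⋃ (_ : (i : ℕ) < k), F i).ncard ≤ maxUnionCard G k := by
  have h := ncard_biUnion_le_maxUnionCard ({i : Fin m | i.val < k} : Finset _) fun i _ => hF i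
  rw [Fin.card_filter_val_lt, min_eq_right hk] at h
  convert h using 2
  simp

namespace IsOptimalPartition

variable {F : Fin m → Set γ}

theorem image_equiv (e : γ ≃ δ) {H : Set δ → Prop}
    (hF : IsOptimalPartition (fun S => H (e '' S)) F) :
    IsOptimalPartition H (fun i => e '' F i) where
  good := hF.good
  pairwise_disjoint _ _ hij := (disjoint_image_iff e.injective).2 (hF.pairwise_disjoint hij)
  iUnion_eq_univ := by rw [← image_iUnion, hF.iUnion_eq_univ, image_univ, e.range_eq_univ]
  ncard_iUnion_fin_lt_of_le k hk := by
    rw [← maxUnionCard_image_equiv e, ← hF.ncard_iUnion_fin_lt_of_le k hk,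
      ← ncard_image_of_injective _ e.injective]
    simp only [image_iUnion]

variable [Finite γ] {G : Set γ → Prop}

theorem ncard_iUnion_fin_lt (hF : IsOptimalPartition G F) (hG : G ∅) (k : ℕ) :
    (⋃ i : Fin m, ⋃ (_ : (i : ℕ) < k), F i).ncard = maxUnionCard G k := by
  obtain hk | hk := le_or_gt k m
  · exact hF.ncard_iUnion_fin_lt_of_le k hk
  rw [iUnion_fin_lt_of_le F hk.le, hF.iUnion_eq_univ, ncard_univ]
  refine le_antisymm ?_ (maxUnionCard_le_card G k)
  calc Nat.card γ = maxUnionCard G m := by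
        rw [← hF.ncard_iUnion_fin_lt_of_le m le_rfl, iUnion_fin_lt_of_le F le_rfl,
          hF.iUnion_eq_univ, ncard_univ]
    _ ≤ maxUnionCard G k := maxUnionCard_mono hG hk.le

theorem maxUnionCard_eq_sum (hF : IsOptimalPartition G F) (hG : G ∅) (k : ℕ) :
    maxUnionCard G k = ∑ i : Fin m with i.val < k, (F i).ncard := by
  rw [← hF.ncard_iUnion_fin_lt hG, ncard_iUnion_fin_lt_eq_sum hF.pairwise_disjoint]

protected theorem padEmpty (hF : IsOptimalPartition G F) (hG : G ∅) {n : ℕ} (hmn : m ≤ n) :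
    IsOptimalPartition G (padEmpty F n) where
  good i := by
    unfold padEmpty
    split_ifs
    exacts [hF.good _, hG]
  pairwise_disjoint i j hij := by
    simp only [onFun, padEmpty]
    split_ifs
    · exact hF.pairwise_disjoint fun h => hij (Fin.ext (Fin.mk.inj h))
    all_goals simp
  iUnion_eq_univ := by rw [iUnion_padEmpty F hmn, hF.iUnion_eq_univ]
  ncard_iUnion_fin_lt_of_le k _ := by rw [iUnion_fin_lt_padEmpty F hmn, hF.ncard_iUnion_fin_lt hG]

end IsOptimalPartition

end OptimalPartition

section SumFamilies

variable {α β : Type*}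

theorem ncard_image_inl_union_image_inr [Finite α] [Finite β] (S : Set α) (T : Set β) :
    (Sum.inl '' S ∪ Sum.inr '' T : Set (α ⊕ β)).ncard = S.ncard + T.ncard := by
  rw [ncard_union_eq disjoint_image_inl_image_inr, ncard_image_of_injective _ Sum.inl_injective,
    ncard_image_of_injective _ Sum.inr_injective]

theorem ncard_eq_ncard_preimage_inl_add [Finite α] [Finite β] (U : Set (α ⊕ β)) :
    U.ncard = (Sum.inl ⁻¹' U).ncard + (Sum.inr ⁻¹' U).ncard := by
  conv_lhs => rw [← image_preimage_inl_union_image_preimage_inr U]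
  exact ncard_image_inl_union_image_inr _ _

variable {Gα : Set α → Prop} {Gβ : Set β → Prop} {Gγ : Set (α ⊕ β) → Prop}
  (hα : Gα ∅) (hβ : Gβ ∅) {m p q : ℕ}

section Product

variable (hprod : ∀ U, Gγ U ↔ Gα (Sum.inl ⁻¹' U) ∧ Gβ (Sum.inr ⁻¹' U))
include hprod

theorem good_image_inl_union_image_inr {S : Set α} {T : Set β} (hS : Gα S) (hT : Gβ T) :
    Gγ (Sum.inl '' S ∪ Sum.inr '' T) :=
  (hprod _).2 (by simpa [preimage_image_eq _ Sum.inl_injective,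
    preimage_image_eq _ Sum.inr_injective] using ⟨hS, hT⟩)

variable [Finite α] [Finite β]
include hα hβ

theorem maxUnionCard_eq_add_of_forall_iff (k : ℕ) :
    maxUnionCard Gγ k = maxUnionCard Gα k + maxUnionCard Gβ k := by
  refine le_antisymm (csSup_le' ?_) ?_
  · rintro _ ⟨W, hW, rfl⟩
    rw [ncard_eq_ncard_preimage_inl_add, preimage_iUnion, preimage_iUnion]
    exact add_le_add (ncard_iUnion_le_maxUnionCard fun i => ((hprod _).1 (hW i)).1)
      (ncard_iUnion_le_maxUnionCard fun i => ((hprod _).1 (hW i)).2)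
  · obtain ⟨A, hA, hAcard⟩ := exists_ncard_iUnion_eq_maxUnionCard hα k
    obtain ⟨B, hB, hBcard⟩ := exists_ncard_iUnion_eq_maxUnionCard hβ k
    rw [← hAcard, ← hBcard, ← ncard_image_inl_union_image_inr, image_iUnion, image_iUnion,
      ← iUnion_union_distrib]
    exact ncard_iUnion_le_maxUnionCard fun i => good_image_inl_union_image_inr hprod (hA i) (hB i)

theorem IsOptimalPartition.image_inl_union_image_inr {A : Fin m → Set α} {B : Fin m → Set β}
    (hA : IsOptimalPartition Gα A) (hB : IsOptimalPartition Gβ B) :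
    IsOptimalPartition Gγ (fun i => Sum.inl '' A i ∪ Sum.inr '' B i) where
  good i := good_image_inl_union_image_inr hprod (hA.good i) (hB.good i)
  pairwise_disjoint i j hij := by
    simp only [onFun, disjoint_union_left, disjoint_union_right, disjoint_image_inl_image_inr,
      disjoint_image_inl_image_inr.symm, disjoint_image_iff Sum.inl_injective,
      disjoint_image_iff Sum.inr_injective, hA.pairwise_disjoint hij, hB.pairwise_disjoint hij,
      and_self]
  iUnion_eq_univ := by
    rw [iUnion_union_distrib, ← image_iUnion, ← image_iUnion, hA.iUnion_eq_univ,
      hB.iUnion_eq_univ, image_univ, image_univ, range_inl_union_range_inr]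
  ncard_iUnion_fin_lt_of_le k hk := by
    simp only [iUnion_union_distrib, ← image_iUnion]
    rw [ncard_image_inl_union_image_inr, hA.ncard_iUnion_fin_lt_of_le k hk,
      hB.ncard_iUnion_fin_lt_of_le k hk, maxUnionCard_eq_add_of_forall_iff hα hβ hprod]

theorem exists_isOptimalPartition_max {A : Fin p → Set α} {B : Fin q → Set β}
    (hA : IsOptimalPartition Gα A) (hB : IsOptimalPartition Gβ B) :
    ∃ F : Fin (max p q) → Set (α ⊕ β), IsOptimalPartition Gγ F :=
  ⟨_, (hA.padEmpty hα (le_max_left p q)).image_inl_union_image_inr hα hβ hprod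
    (hB.padEmpty hβ (le_max_right p q))⟩

end Product

def sumBlocks (A : Fin p → Set α) (B : Fin q → Set β) : Fin p ⊕ Fin q → Set (α ⊕ β) :=
  Sum.elim (fun i => Sum.inl '' A i) (fun j => Sum.inr '' B j)

theorem pairwise_disjoint_sumBlocks {A : Fin p → Set α} {B : Fin q → Set β}
    (hA : Pairwise (Disjoint on A)) (hB : Pairwise (Disjoint on B)) :
    Pairwise (Disjoint on sumBlocks A B) := by
  rintro (i | i) (j | j) hij
  · exact (disjoint_image_iff Sum.inl_injective).2 (hA fun h => hij (h ▸ rfl))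
  · exact disjoint_image_inl_image_inr
  · exact disjoint_image_inl_image_inr.symm
  · exact (disjoint_image_iff Sum.inr_injective).2 (hB fun h => hij (h ▸ rfl))

theorem iUnion_sumBlocks (A : Fin p → Set α) (B : Fin q → Set β) :
    ⋃ e, sumBlocks A B e = Sum.inl '' (⋃ i, A i) ∪ Sum.inr '' (⋃ j, B j) := by
  simp only [sumBlocks, iUnion_sum, Sum.elim_inl, Sum.elim_inr, image_iUnion]

section OneSided

variable (hsplit : ∀ U, Gγ U ↔
  Gα (Sum.inl ⁻¹' U) ∧ Gβ (Sum.inr ⁻¹' U) ∧ (Sum.inl ⁻¹' U = ∅ ∨ Sum.inr ⁻¹' U = ∅))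
include hsplit

include hβ in
theorem good_image_inl {S : Set α} (hS : Gα S) : Gγ (Sum.inl '' S) :=
  (hsplit _).2 (by simpa [preimage_image_eq _ Sum.inl_injective] using ⟨hS, hβ⟩)

include hα in
theorem good_image_inr {T : Set β} (hT : Gβ T) : Gγ (Sum.inr '' T) :=
  (hsplit _).2 (by simpa [preimage_image_eq _ Sum.inr_injective] using ⟨hα, hT⟩)

variable [Finite α] [Finite β]

theorem exists_ncard_iUnion_le_of_forall_iff {k : ℕ} {W : Fin k → Set (α ⊕ β)}
    (hW : ∀ t, Gγ (W t)) :
    ∃ s ≤ k, (⋃ t, W t).ncard ≤ maxUnionCard Gα s + maxUnionCard Gβ (k - s) := by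
  classical
  let L : Finset (Fin k) := {t | Sum.inr ⁻¹' W t = ∅}
  have hW' := fun t => (hsplit _).1 (hW t)
  have hleft : Sum.inl ⁻¹' ⋃ t, W t = ⋃ t ∈ L, Sum.inl ⁻¹' W t := by
    ext a
    simp only [preimage_iUnion, mem_iUnion, Finset.mem_filter_univ, L]
    refine ⟨fun ⟨t, ha⟩ => ⟨t, ?_, ha⟩, fun ⟨t, _, ha⟩ => ⟨t, ha⟩⟩
    exact (hW' t).2.2.resolve_left (nonempty_iff_ne_empty.1 ⟨a, ha⟩)
  have hright : Sum.inr ⁻¹' ⋃ t, W t = ⋃ t ∈ Lᶜ, Sum.inr ⁻¹' W t := by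
    ext b
    simp only [preimage_iUnion, mem_iUnion, Finset.mem_compl, Finset.mem_filter_univ, L]
    exact ⟨fun ⟨t, hb⟩ => ⟨t, nonempty_iff_ne_empty.1 ⟨b, hb⟩, hb⟩, fun ⟨t, _, hb⟩ => ⟨t, hb⟩⟩
  refine ⟨L.card, (Finset.card_le_univ L).trans (by simp), ?_⟩
  rw [ncard_eq_ncard_preimage_inl_add, hleft, hright]
  have hLc : Lᶜ.card = k - L.card := by rw [Finset.card_compl, Fintype.card_fin]
  exact add_le_add (ncard_biUnion_le_maxUnionCard L fun t _ => (hW' t).1)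
    (hLc ▸ ncard_biUnion_le_maxUnionCard Lᶜ fun t _ => (hW' t).2.1)

include hα hβ

theorem maxUnionCard_one_eq_max :
    maxUnionCard Gγ 1 = max (maxUnionCard Gα 1) (maxUnionCard Gβ 1) := by
  refine le_antisymm (csSup_le' ?_) (max_le ?_ ?_)
  · rintro _ ⟨W, hW, rfl⟩
    obtain ⟨s, hs, h⟩ := exists_ncard_iUnion_le_of_forall_iff hsplit hW
    interval_cases s <;> simp only [maxUnionCard_zero, Nat.sub_self, Nat.sub_zero] at h <;> omega
  · exact maxUnionCard_le_maxUnionCard_of_injective Sum.inl_injective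
      (fun _ hS => good_image_inl hβ hsplit hS) 1
  · exact maxUnionCard_le_maxUnionCard_of_injective Sum.inr_injective
      (fun _ hT => good_image_inr hα hsplit hT) 1

theorem maxUnionCard_le_sum_sumBlocks {A : Fin p → Set α} {B : Fin q → Set β}
    (hA : IsOptimalPartition Gα A) (hB : IsOptimalPartition Gβ B)
    {σ : Fin (p + q) ≃ Fin p ⊕ Fin q} (hσ : Antitone ((fun e => (sumBlocks A B e).ncard) ∘ σ))
    {k : ℕ} (hk : k ≤ p + q) :
    maxUnionCard Gγ k ≤ ∑ j : Fin (p + q) with j.val < k, (sumBlocks A B (σ j)).ncard := by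
  refine csSup_le' ?_
  rintro _ ⟨W, hW, rfl⟩
  obtain ⟨s, hs, hWs⟩ := exists_ncard_iUnion_le_of_forall_iff hsplit hW
  let I : Finset (Fin p ⊕ Fin q) :=
    ({i : Fin p | i.val < s} : Finset _).disjSum ({j : Fin q | j.val < k - s} : Finset _)
  have hI : maxUnionCard Gα s + maxUnionCard Gβ (k - s) = ∑ e ∈ I, (sumBlocks A B e).ncard := by
    rw [hA.maxUnionCard_eq_sum hα, hB.maxUnionCard_eq_sum hβ, Finset.sum_disjSum]
    simp [sumBlocks, ncard_image_of_injective _ Sum.inl_injective,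
      ncard_image_of_injective _ Sum.inr_injective]
  have hIcard : I.card ≤ k := by
    simp only [I, Finset.card_disjSum, Fin.card_filter_val_lt]
    omega
  exact hWs.trans (hI ▸ sum_le_sum_fin_lt_of_antitone _ σ hσ hIcard hk)

theorem exists_isOptimalPartition_add {A : Fin p → Set α} {B : Fin q → Set β}
    (hA : IsOptimalPartition Gα A) (hB : IsOptimalPartition Gβ B) :
    ∃ F : Fin (p + q) → Set (α ⊕ β), IsOptimalPartition Gγ F := by
  have hgood : ∀ e, Gγ (sumBlocks A B e) := by
    rintro (i | j)
    exacts [good_image_inl hβ hsplit (hA.good i), good_image_inr hα hsplit (hB.good j)]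
  obtain ⟨σ, hσ⟩ := exists_equiv_fin_antitone (fun e => (sumBlocks A B e).ncard)
    (by simp : Fintype.card (Fin p ⊕ Fin q) = p + q)
  have hdisj : Pairwise (Disjoint on (sumBlocks A B ∘ σ)) :=
    (pairwise_disjoint_sumBlocks hA.pairwise_disjoint hB.pairwise_disjoint).comp_of_injective
      σ.injective
  refine ⟨sumBlocks A B ∘ σ, fun i => hgood (σ i), hdisj, ?_, fun k hk => ?_⟩
  · rw [comp_def, σ.surjective.iUnion_comp (sumBlocks A B), iUnion_sumBlocks, hA.iUnion_eq_univ,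
      hB.iUnion_eq_univ, image_univ, image_univ, range_inl_union_range_inr]
  refine le_antisymm (ncard_iUnion_fin_lt_le_maxUnionCard (fun i => hgood (σ i)) hk) ?_
  rw [ncard_iUnion_fin_lt_eq_sum hdisj]
  exact maxUnionCard_le_sum_sumBlocks hα hβ hsplit hA hB hσ hk

end OneSided

end SumFamilies

namespace Sum

variable {α β : Type*} {r : α → α → Prop} {s : β → β → Prop} {U : Set (α ⊕ β)}

theorem isAntichain_liftRel_iff :
    IsAntichain (Sum.LiftRel r s) U ↔
      IsAntichain r (Sum.inl ⁻¹' U) ∧ IsAntichain s (Sum.inr ⁻¹' U) := by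
  refine ⟨fun h => ⟨h.preimage_relEmbedding (RelEmbedding.sumLiftRelInl r s),
    h.preimage_relEmbedding (RelEmbedding.sumLiftRelInr r s)⟩, ?_⟩
  rintro ⟨hl, hr⟩ (a | a) ha (b | b) hb hne
  · exact fun h => hl ha hb (by simpa using hne) (Sum.liftRel_inl_inl.1 h)
  · exact Sum.not_liftRel_inl_inr
  · exact Sum.not_liftRel_inr_inl
  · exact fun h => hr ha hb (by simpa using hne) (Sum.liftRel_inr_inr.1 h)

theorem isChain_lex_iff :
    IsChain (Sum.Lex r s) U ↔ IsChain r (Sum.inl ⁻¹' U) ∧ IsChain s (Sum.inr ⁻¹' U) := by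
  refine ⟨fun h => ⟨h.preimage_relEmbedding (RelEmbedding.sumLexInl r s),
    h.preimage_relEmbedding (RelEmbedding.sumLexInr r s)⟩, ?_⟩
  rintro ⟨hl, hr⟩ (a | a) ha (b | b) hb hne
  · simpa using hl ha hb (by simpa using hne)
  · exact Or.inl (Sum.Lex.sep a b)
  · exact Or.inr (Sum.Lex.sep b a)
  · simpa using hr ha hb (by simpa using hne)

theorem isChain_liftRel_iff :
    IsChain (Sum.LiftRel r s) U ↔ IsChain r (Sum.inl ⁻¹' U) ∧ IsChain s (Sum.inr ⁻¹' U) ∧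
      (Sum.inl ⁻¹' U = ∅ ∨ Sum.inr ⁻¹' U = ∅) := by
  constructor
  · refine fun h => ⟨h.preimage_relEmbedding (RelEmbedding.sumLiftRelInl r s),
      h.preimage_relEmbedding (RelEmbedding.sumLiftRelInr r s), ?_⟩
    by_contra! hne
    obtain ⟨⟨a, ha⟩, ⟨b, hb⟩⟩ := hne
    simpa using h (mem_preimage.1 ha) (mem_preimage.1 hb) Sum.inl_ne_inr
  rintro ⟨hl, hr, hU⟩ (a | a) ha (b | b) hb hne
  · simpa using hl ha hb (by simpa using hne)
  · rcases hU with hU | hU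
    exacts [(hU.subset ha).elim, (hU.subset hb).elim]
  · rcases hU with hU | hU
    exacts [(hU.subset hb).elim, (hU.subset ha).elim]
  · simpa using hr ha hb (by simpa using hne)

theorem isAntichain_lex_iff :
    IsAntichain (Sum.Lex r s) U ↔ IsAntichain r (Sum.inl ⁻¹' U) ∧ IsAntichain s (Sum.inr ⁻¹' U) ∧
      (Sum.inl ⁻¹' U = ∅ ∨ Sum.inr ⁻¹' U = ∅) := by
  constructor
  · refine fun h => ⟨h.preimage_relEmbedding (RelEmbedding.sumLexInl r s),
      h.preimage_relEmbedding (RelEmbedding.sumLexInr r s), ?_⟩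
    by_contra! hne
    obtain ⟨⟨a, ha⟩, ⟨b, hb⟩⟩ := hne
    exact h (mem_preimage.1 ha) (mem_preimage.1 hb) Sum.inl_ne_inr (Sum.Lex.sep a b)
  rintro ⟨hl, hr, hU⟩ (a | a) ha (b | b) hb hne
  · exact fun h => hl ha hb (by simpa using hne) (Sum.lex_inl_inl.1 h)
  · rcases hU with hU | hU
    exacts [(hU.subset ha).elim, (hU.subset hb).elim]
  · exact Sum.lex_inr_inl
  · exact fun h => hr ha hb (by simpa using hne) (Sum.lex_inr_inr.1 h)

end Sum

section Decomposable

variable {α β : Type*} [PartialOrder α] [PartialOrder β]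

theorem heightP_eq_maxUnionCard : heightP α = maxUnionCard (IsChain (· ≤ ·) : Set α → Prop) 1 :=
  (maxUnionCard_one _).symm

theorem widthP_eq_maxUnionCard :
    widthP α = maxUnionCard (IsAntichain (· ≤ ·) : Set α → Prop) 1 :=
  (maxUnionCard_one _).symm

theorem isChain_toLex_image_iff {U : Set (α ⊕ β)} :
    IsChain (· ≤ ·) (toLex '' U) ↔ IsChain (Sum.Lex (· ≤ ·) (· ≤ ·)) U :=
  IsChain.image_relIso_iff (φ := Sum.Lex.toLexRelIsoLE)

theorem isAntichain_toLex_image_iff {U : Set (α ⊕ β)} :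
    IsAntichain (· ≤ ·) (toLex '' U) ↔ IsAntichain (Sum.Lex (· ≤ ·) (· ≤ ·)) U :=
  IsAntichain.image_relIso_iff (φ := Sum.Lex.toLexRelIsoLE)

variable [Finite α] [Finite β]

theorem heightP_sum : heightP (α ⊕ β) = max (heightP α) (heightP β) := by
  simp only [heightP_eq_maxUnionCard]
  exact maxUnionCard_one_eq_max IsChain.empty IsChain.empty fun _ => Sum.isChain_liftRel_iff

theorem widthP_sum : widthP (α ⊕ β) = widthP α + widthP β := by
  simp only [widthP_eq_maxUnionCard]
  exact maxUnionCard_eq_add_of_forall_iff IsAntichain.empty IsAntichain.empty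
    (fun _ => Sum.isAntichain_liftRel_iff) 1

theorem heightP_sumLex : heightP (α ⊕ₗ β) = heightP α + heightP β := by
  simp only [heightP_eq_maxUnionCard, ← maxUnionCard_image_equiv toLex]
  exact maxUnionCard_eq_add_of_forall_iff IsChain.empty IsChain.empty
    (fun _ => isChain_toLex_image_iff.trans Sum.isChain_lex_iff) 1

theorem widthP_sumLex : widthP (α ⊕ₗ β) = max (widthP α) (widthP β) := by
  simp only [widthP_eq_maxUnionCard, ← maxUnionCard_image_equiv toLex]
  exact maxUnionCard_one_eq_max IsAntichain.empty IsAntichain.empty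
    fun _ => isAntichain_toLex_image_iff.trans Sum.isAntichain_lex_iff

theorem DDecomposable.sum (hα : DDecomposable α) (hβ : DDecomposable β) :
    DDecomposable (α ⊕ β) := by
  rw [dDecomposable_iff] at hα hβ ⊢
  obtain ⟨A, hA⟩ := hα
  obtain ⟨B, hB⟩ := hβ
  rw [heightP_sum]
  exact exists_isOptimalPartition_max IsAntichain.empty IsAntichain.empty
    (fun _ => Sum.isAntichain_liftRel_iff) hA hB

theorem CDecomposable.sum (hα : CDecomposable α) (hβ : CDecomposable β) :
    CDecomposable (α ⊕ β) := by
  rw [cDecomposable_iff] at hα hβ ⊢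
  obtain ⟨A, hA⟩ := hα
  obtain ⟨B, hB⟩ := hβ
  rw [widthP_sum]
  exact exists_isOptimalPartition_add IsChain.empty IsChain.empty
    (fun _ => Sum.isChain_liftRel_iff) hA hB

theorem DDecomposable.sumLex (hα : DDecomposable α) (hβ : DDecomposable β) :
    DDecomposable (α ⊕ₗ β) := by
  rw [dDecomposable_iff] at hα hβ ⊢
  obtain ⟨A, hA⟩ := hα
  obtain ⟨B, hB⟩ := hβ
  obtain ⟨F, hF⟩ := exists_isOptimalPartition_add IsAntichain.empty IsAntichain.empty
    (fun _ => isAntichain_toLex_image_iff.trans Sum.isAntichain_lex_iff) hA hB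
  rw [heightP_sumLex]
  exact ⟨_, hF.image_equiv toLex⟩

theorem CDecomposable.sumLex (hα : CDecomposable α) (hβ : CDecomposable β) :
    CDecomposable (α ⊕ₗ β) := by
  rw [cDecomposable_iff] at hα hβ ⊢
  obtain ⟨A, hA⟩ := hα
  obtain ⟨B, hB⟩ := hβ
  obtain ⟨F, hF⟩ := exists_isOptimalPartition_max IsChain.empty IsChain.empty
    (fun _ => isChain_toLex_image_iff.trans Sum.isChain_lex_iff) hA hB
  rw [widthP_sumLex]
  exact ⟨_, hF.image_equiv toLex⟩

end Decomposable

/-- If finite posets `P`, `P'` are both d-decomposable, then so are their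
series composition `P * P'` (the lexicographic sum `α ⊕ₗ β`) and their
parallel composition `P + P'` (the disjoint sum `α ⊕ β`); likewise for
c-decomposability. -/
theorem dDecomposable_cDecomposable_series_parallel
    (α β : Type) [Fintype α] [PartialOrder α] [Fintype β] [PartialOrder β] :
    (DDecomposable α → DDecomposable β →
      DDecomposable (α ⊕ₗ β) ∧ DDecomposable (α ⊕ β)) ∧
    (CDecomposable α → CDecomposable β →
      CDecomposable (α ⊕ₗ β) ∧ CDecomposable (α ⊕ β)) :=
  ⟨fun hα hβ => ⟨hα.sumLex hβ, hα.sum hβ⟩, fun hα hβ => ⟨hα.sumLex hβ, hα.sum hβ⟩⟩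
end
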